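/- For every W ∈ 𝔇 (that is, W ∈ 𝔇_ε for some ε > 0) and every real ℓ ≥ 0, the outer boundary of the discretization of W^± decomposes as ∂(W^±_ℓ) = ∂(W_ℓ) ∪ ∂(W⁻_ℓ); in particular W_ℓ ∩ ∂(W⁻_ℓ) = ∅ and W⁻_ℓ ∩ ∂(W_ℓ) = ∅. -/
import Mathlib


open MeasureTheory Metric Set

noncomputable section

/-- The Euclidean plane `ℝ²`. -/
abbrev Plane := EuclideanSpace ℝ (Fin 2)

/-- The embedding of the lattice `ℤ²` into the Euclidean plane. -/
def latt (x : ℤ × ℤ) : Plane := (WithLp.equiv 2 (Fin 2 → ℝ)).symm ![(x.1 : ℝ), (x.2 : ℝ)]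

/-- The discretization `W_ℓ = {x ∈ ℤ² : dist(e^{−ℓ}·x, Wᶜ) > e^{−ℓ}/2}` of `W ⊆ ℝ²`
at scale `ℓ`. -/
def disc (W : Set Plane) (ℓ : ℝ) : Set (ℤ × ℤ) :=
  {x | Real.exp (-ℓ) / 2 < infDist (Real.exp (-ℓ) • latt x) Wᶜ}

/-- The outer boundary `∂D = {x ∈ ℤ² ∖ D : |x − y| = 1 for some y ∈ D}` of `D ⊆ ℤ²`. -/
def obd (D : Set (ℤ × ℤ)) : Set (ℤ × ℤ) :=
  {x | x ∉ D ∧ ∃ y ∈ D, dist (latt x) (latt y) = 1}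

/-- Membership in the class `𝔇_ε`: an open set whose topological boundary has finitely
many connected components, each of diameter at least `ε`, with `B(0,ε) ⊆ W ⊆ B(0,ε⁻¹)`. -/
def goodDomain (ε : ℝ) (W : Set Plane) : Prop :=
  IsOpen W ∧
  {C : Set Plane | ∃ x ∈ frontier W, C = connectedComponentIn (frontier W) x}.Finite ∧
  (∀ x ∈ frontier W, ε ≤ diam (connectedComponentIn (frontier W) x)) ∧
  ball (0 : Plane) ε ⊆ W ∧ W ⊆ ball (0 : Plane) ε⁻¹

/-- `W^± = int(W) ∪ int(Wᶜ)`. -/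
def pm (W : Set Plane) : Set Plane := interior W ∪ interior Wᶜ

open Set.Notation in
lemma seg_hits_frontier {S : Set Plane} (hS : IsOpen S) {p q : Plane}
    (hp : p ∈ S) (hq : q ∉ S) : ∃ s ∈ frontier S, dist p s ≤ dist p q := by
  have hseg : IsPreconnected (segment ℝ p q) := (convex_segment p q).isPreconnected
  by_contra h
  push_neg at h
  have hdisj : Disjoint (frontier S) (segment ℝ p q) := by
    rw [Set.disjoint_left]
    intro s hs hsseg
    have := dist_add_dist_of_mem_segment hsseg
    exact absurd (by linarith [dist_nonneg (x := s) (y := q)]) (not_le.mpr (h s hs))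
  have hclopen : IsClopen (segment ℝ p q ↓∩ S) := isClopen_preimage_val hS hdisj
  haveI : PreconnectedSpace (segment ℝ p q) := Subtype.preconnectedSpace hseg
  rcases isClopen_iff.mp hclopen with he | hu
  · have : (⟨p, left_mem_segment ℝ p q⟩ : segment ℝ p q) ∈ (segment ℝ p q ↓∩ S) := hp
    rw [he] at this; exact this
  · have : (⟨q, right_mem_segment ℝ p q⟩ : segment ℝ p q) ∈ (segment ℝ p q ↓∩ S) := by
      rw [hu]; trivial
    exact hq this

/-- the outer boundary of `W^±_ℓ` decomposes as `∂(W_ℓ) ∪ ∂(W⁻_ℓ)`;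
in particular `W_ℓ ∩ ∂(W⁻_ℓ) = ∅` and `W⁻_ℓ ∩ ∂(W_ℓ) = ∅`. -/
theorem boundary_decomposition (W : Set Plane) (hW : ∃ ε > 0, goodDomain ε W)
    (ℓ : ℝ) (hℓ : 0 ≤ ℓ) :
    obd (disc (pm W) ℓ) = obd (disc W ℓ) ∪ obd (disc (interior Wᶜ) ℓ) ∧
    disc W ℓ ∩ obd (disc (interior Wᶜ) ℓ) = ∅ ∧
    disc (interior Wᶜ) ℓ ∩ obd (disc W ℓ) = ∅ := by
  obtain ⟨ε, hε, hopen, -, -, hball, hsub⟩ := hW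
  set r := Real.exp (-ℓ) with hrdef
  have hr : 0 < r := Real.exp_pos _
  have hWne : W.Nonempty := ⟨0, hball (mem_ball_self hε)⟩
  have hWuniv : W ≠ univ := by
    intro h
    exact NormedSpace.unbounded_univ ℝ Plane (Metric.isBounded_ball.subset (h ▸ hsub))
  have hWc : Wᶜ.Nonempty := nonempty_compl.mpr hWuniv
  have hclne : (closure W).Nonempty := hWne.closure
  have hfr : (frontier W).Nonempty := nonempty_frontier_iff.mpr ⟨hWne, hWuniv⟩
  have hfrW : frontier W ⊆ Wᶜ := by
    rw [hopen.frontier_eq]; exact fun s hs => hs.2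
  have hfrcl : frontier W ⊆ closure W := frontier_subset_closure
  have hiWc : (interior Wᶜ)ᶜ = closure W := by rw [interior_compl, compl_compl]
  -- no adjacency between disc W and disc (interior Wᶜ)
  have hadj : ∀ x ∈ disc W ℓ, ∀ y ∈ disc (interior Wᶜ) ℓ,
      dist (latt x) (latt y) ≠ 1 := by
    intro x hx y hy h1
    simp only [disc, mem_setOf_eq, ← hrdef] at hx hy
    rw [hiWc] at hy
    set p := r • latt x with hp
    set q := r • latt y with hq
    have hpq : dist p q = r := by
      rw [hp, hq, dist_smul₀, h1, mul_one, Real.norm_eq_abs, abs_of_pos hr]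
    set m := midpoint ℝ p q with hm
    have hm1 : dist p m = r / 2 := by
      rw [dist_comm, hm, dist_midpoint_left, hpq]
      simp; ring
    have hm2 : dist q m = r / 2 := by
      rw [dist_comm, hm, dist_midpoint_right, hpq]
      simp; ring
    have hmW : m ∈ W := by
      by_contra hmW
      have := infDist_le_dist_of_mem (x := p) (s := Wᶜ) hmW
      rw [hm1] at this; linarith
    have := infDist_le_dist_of_mem (x := q) (s := closure W) (subset_closure hmW)
    rw [hm2] at this; linarith
  -- (pm W)ᶜ = frontier W
  have hpmc : (pm W)ᶜ = frontier W := by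
    rw [pm, hopen.interior_eq, interior_compl, compl_union, compl_compl,
      frontier_eq_closure_inter_closure, hopen.isClosed_compl.closure_eq, inter_comm]
  -- disc (pm W) = disc W ∪ disc (interior Wᶜ)
  have hPAB : disc (pm W) ℓ = disc W ℓ ∪ disc (interior Wᶜ) ℓ := by
    ext x
    simp only [disc, mem_setOf_eq, mem_union, hpmc, hiWc, ← hrdef]
    set p := r • latt x with hp
    constructor
    · intro hx
      have hpfr : p ∉ frontier W := by
        intro h
        rw [infDist_zero_of_mem h] at hx; linarith
      by_cases hpW : p ∈ W
      · left
        by_contra hlt; push_neg at hlt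
        have h2 : infDist p Wᶜ < infDist p (frontier W) := lt_of_le_of_lt hlt hx
        obtain ⟨q, hq, hqd⟩ := (infDist_lt_iff hWc).mp h2
        obtain ⟨s, hs, hsd⟩ := seg_hits_frontier hopen hpW hq
        have := infDist_le_dist_of_mem (x := p) hs
        linarith
      · have hpcl : p ∉ closure W := by
          rw [closure_eq_self_union_frontier]
          rintro (h | h)
          exacts [hpW h, hpfr h]
        right
        by_contra hlt; push_neg at hlt
        have h2 : infDist p (closure W) < infDist p (frontier W) := lt_of_le_of_lt hlt hx
        obtain ⟨q, hq, hqd⟩ := (infDist_lt_iff hclne).mp h2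
        obtain ⟨s, hs, hsd⟩ :=
          seg_hits_frontier isClosed_closure.isOpen_compl hpcl (by simpa using hq)
        have hs' : s ∈ frontier W := by
          rw [frontier_compl] at hs
          exact frontier_closure_subset hs
        have := infDist_le_dist_of_mem (x := p) hs'
        linarith
    · rintro (hx | hx)
      · exact lt_of_lt_of_le hx (infDist_le_infDist_of_subset hfrW hfr)
      · exact lt_of_lt_of_le hx (infDist_le_infDist_of_subset hfrcl hfr)
  refine ⟨?_, ?_, ?_⟩
  · ext x
    simp only [obd, mem_setOf_eq, hPAB, mem_union]
    constructor
    · rintro ⟨hxn, y, hy | hy, hd⟩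
      · exact Or.inl ⟨fun h => hxn (Or.inl h), y, hy, hd⟩
      · exact Or.inr ⟨fun h => hxn (Or.inr h), y, hy, hd⟩
    · rintro (⟨hxn, y, hy, hd⟩ | ⟨hxn, y, hy, hd⟩)
      · refine ⟨?_, y, Or.inl hy, hd⟩
        rintro (h | h)
        · exact hxn h
        · exact hadj y hy x h (by rwa [dist_comm] at hd)
      · refine ⟨?_, y, Or.inr hy, hd⟩
        rintro (h | h)
        · exact hadj x h y hy hd
        · exact hxn h
  · ext x
    simp only [mem_inter_iff, mem_empty_iff_false, iff_false, obd, mem_setOf_eq]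
    rintro ⟨hxA, _, y, hy, hd⟩
    exact hadj x hxA y hy hd
  · ext x
    simp only [mem_inter_iff, mem_empty_iff_false, iff_false, obd, mem_setOf_eq]
    rintro ⟨hxB, _, y, hy, hd⟩
    exact hadj y hy x hxB (by rwa [dist_comm] at hd)


end
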